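/- arXiv:1605.05785 — 2 statements merged into one kernel-verified Lean document; each statement's English description precedes it below -/
import Mathlib

section
/- (Bias bound.) Let 0 ≤ s < s', let p, q ∈ H^{s'}(X) be probability densities (with D = 1), and let the samples and estimator Ŝ_n be as in the context. Then for every integer Z_n ≥ 1, |E[Ŝ_n] − ⟨p, q⟩_{H^s}| ≤ ‖p‖_{H^{s'}} · ‖q‖_{H^{s'}} · Z_n^{2(s − s')}. -/
open MeasureTheory ProbabilityTheory Filter Topology ComplexConjugate BoundedContinuousFunction

noncomputable section

/-! ### 1-dimensional definitions on X = [-π, π] -/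

/-- The domain `X = [-π, π] ⊆ ℝ`. -/
def X1 : Set ℝ := Set.Icc (-Real.pi) Real.pi

/-- The `z`-th Fourier coefficient `c_f(z) = ∫_{-π}^{π} e^{-izx} f(x) dx`. -/
def fc (f : ℝ → ℂ) (z : ℤ) : ℂ :=
  ∫ x in X1, Complex.exp (-(Complex.I * z * x)) * f x

/-- The Sobolev weight `z^{2s} := (z²)^s`, with the convention `0⁰ = 1`. -/
def wt (s : ℝ) (z : ℤ) : ℝ := ((z : ℝ) ^ 2) ^ s

/-- The squared Sobolev norm `‖f‖²_{H^s} = Σ_z z^{2s} |c_f(z)|²`. -/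
def normHsSq (s : ℝ) (f : ℝ → ℂ) : ℝ :=
  ∑' z : ℤ, wt s z * ‖fc f z‖ ^ 2

/-- Membership in the Sobolev space `H^s(X)`. -/
def MemHs (s : ℝ) (f : ℝ → ℂ) : Prop :=
  MemLp f 2 (volume.restrict X1) ∧
    Summable (fun z : ℤ => wt s z * ‖fc f z‖ ^ 2)

/-- The Sobolev inner product `⟨f, g⟩_{H^s} = Σ_z z^{2s} c_f(z) conj(c_g(z))`. -/
def innerHs (s : ℝ) (f g : ℝ → ℂ) : ℂ :=
  ∑' z : ℤ, (wt s z : ℂ) * fc f z * conj (fc g z)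

/-- Truncated Fourier projection `f_n(x) = (2π)⁻¹ Σ_{|z| ≤ Z} c_f(z) e^{izx}`. -/
def proj (Z : ℤ) (f : ℝ → ℂ) : ℝ → ℂ := fun x =>
  (2 * Real.pi : ℂ)⁻¹ * ∑ z ∈ Finset.Icc (-Z) Z, fc f z * Complex.exp (Complex.I * z * x)

/-- `p` is a probability density supported in `X = [-π, π]`. -/
def IsProbDensity (p : ℝ → ℝ) : Prop :=
  (∀ x, 0 ≤ p x) ∧ (∀ x ∉ X1, p x = 0) ∧ (∫ x, p x) = 1

/-- The random variable `V` has density `p` (w.r.t. Lebesgue measure) under `μ`. -/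
def HasDensity {Ω : Type*} [MeasurableSpace Ω] (μ : Measure Ω) (V : Ω → ℝ) (p : ℝ → ℝ) : Prop :=
  Measurable V ∧ Measure.map V μ = volume.withDensity (fun x => ENNReal.ofReal (p x))

/-- Empirical Fourier coefficient `ĉ(z) = n⁻¹ Σ_j e^{-iz V_j}`. -/
def hatc {Ω : Type*} (n : ℕ) (V : Fin n → Ω → ℝ) (z : ℤ) (ω : Ω) : ℂ :=
  (n : ℂ)⁻¹ * ∑ j, Complex.exp (-(Complex.I * z * V j ω))

/-- The estimator `Ŝ_n = Σ_{|z| ≤ Z} z^{2s} ĉ_p(z) conj(ĉ_q(z))`. -/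
def estS {Ω : Type*} (s : ℝ) (n : ℕ) (Z : ℤ) (X Y : Fin n → Ω → ℝ) (ω : Ω) : ℂ :=
  ∑ z ∈ Finset.Icc (-Z) Z, (wt s z : ℂ) * hatc n X z ω * conj (hatc n Y z ω)

/-! ### D-dimensional definitions on X = [-π, π]^D -/

/-- The domain `X = [-π, π]^D ⊆ ℝ^D`. -/
def XD (D : ℕ) : Set (Fin D → ℝ) := Set.univ.pi fun _ => Set.Icc (-Real.pi) Real.pi

/-- The pairing `⟨z, x⟩ = Σ_j z_j x_j`. -/
def dotZ {D : ℕ} (z : Fin D → ℤ) (x : Fin D → ℝ) : ℝ := ∑ j, (z j : ℝ) * x j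

/-- The `z`-th Fourier coefficient `c_f(z) = ∫_X e^{-i⟨z,x⟩} f(x) dx`. -/
def fcD {D : ℕ} (f : (Fin D → ℝ) → ℂ) (z : Fin D → ℤ) : ℂ :=
  ∫ x in XD D, Complex.exp (-(Complex.I * (dotZ z x : ℝ))) * f x

/-- The Sobolev weight `z^{2s} := Π_j (z_j²)^s`, with the convention `0⁰ = 1`. -/
def wtD {D : ℕ} (s : ℝ) (z : Fin D → ℤ) : ℝ := ∏ j, ((z j : ℝ) ^ 2) ^ s

/-- The cube of frequencies `{z ∈ ℤ^D : ‖z‖_∞ ≤ Z}` as a finset. -/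
def cube (D : ℕ) (Z : ℤ) : Finset (Fin D → ℤ) :=
  Fintype.piFinset fun _ : Fin D => Finset.Icc (-Z) Z

/-- The squared Sobolev norm `‖f‖²_{H^s} = Σ_{z ∈ ℤ^D} z^{2s} |c_f(z)|²`. -/
def normHsSqD {D : ℕ} (s : ℝ) (f : (Fin D → ℝ) → ℂ) : ℝ :=
  ∑' z : Fin D → ℤ, wtD s z * ‖fcD f z‖ ^ 2

/-- Membership in the Sobolev space `H^s([-π,π]^D)`. -/
def MemHsD {D : ℕ} (s : ℝ) (f : (Fin D → ℝ) → ℂ) : Prop :=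
  MemLp f 2 (volume.restrict (XD D)) ∧
    Summable (fun z : Fin D → ℤ => wtD s z * ‖fcD f z‖ ^ 2)

/-- The Sobolev inner product on `[-π,π]^D`. -/
def innerHsD {D : ℕ} (s : ℝ) (f g : (Fin D → ℝ) → ℂ) : ℂ :=
  ∑' z : Fin D → ℤ, (wtD s z : ℂ) * fcD f z * conj (fcD g z)

/-- Truncated Fourier projection
`f_n(x) = (2π)^{-D} Σ_{‖z‖_∞ ≤ Z} c_f(z) e^{i⟨z,x⟩}`. -/
def projD {D : ℕ} (Z : ℤ) (f : (Fin D → ℝ) → ℂ) : (Fin D → ℝ) → ℂ := fun x =>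
  ((2 * Real.pi : ℂ) ^ D)⁻¹ *
    ∑ z ∈ cube D Z, fcD f z * Complex.exp (Complex.I * (dotZ z x : ℝ))

/-- `p` is a probability density supported in `X = [-π, π]^D`. -/
def IsProbDensityD (D : ℕ) (p : (Fin D → ℝ) → ℝ) : Prop :=
  (∀ x, 0 ≤ p x) ∧ (∀ x ∉ XD D, p x = 0) ∧ (∫ x, p x) = 1

/-- The random variable `V` has density `p` under `μ`. -/
def HasDensityD {Ω : Type*} [MeasurableSpace Ω] {D : ℕ} (μ : Measure Ω)
    (V : Ω → Fin D → ℝ) (p : (Fin D → ℝ) → ℝ) : Prop :=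
  Measurable V ∧ Measure.map V μ = volume.withDensity (fun x => ENNReal.ofReal (p x))

/-- Empirical Fourier coefficient in `D` dimensions. -/
def hatcD {Ω : Type*} {D : ℕ} (n : ℕ) (V : Fin n → Ω → Fin D → ℝ) (z : Fin D → ℤ) (ω : Ω) : ℂ :=
  (n : ℂ)⁻¹ * ∑ j, Complex.exp (-(Complex.I * (dotZ z (V j ω) : ℝ)))

/-- The estimator `Ŝ_n` in `D` dimensions. -/
def estSD {Ω : Type*} {D : ℕ} (s : ℝ) (n : ℕ) (Z : ℤ)
    (X Y : Fin n → Ω → Fin D → ℝ) (ω : Ω) : ℂ :=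
  ∑ z ∈ cube D Z, (wtD s z : ℂ) * hatcD n X z ω * conj (hatcD n Y z ω)


open scoped NNReal ENNReal
lemma pf_aemeas (p : ℝ → ℝ) (hpd : IsProbDensity p)
    (hp : AEStronglyMeasurable (fun x => (p x : ℂ)) (volume.restrict X1)) :
    AEMeasurable p (volume : Measure ℝ) := by
  have h1 : AEMeasurable p (volume.restrict X1) := by
    have h2 : AEMeasurable (fun x => ((p x : ℂ)).re) (volume.restrict X1) :=
      Complex.measurable_re.comp_aemeasurable hp.aemeasurable
    simpa using h2
  have hX1 : MeasurableSet X1 := measurableSet_Icc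
  have hind : p = X1.indicator p := by
    funext x
    by_cases hx : x ∈ X1
    · simp [Set.indicator_of_mem hx]
    · simp [Set.indicator_of_notMem hx, hpd.2.1 x hx]
  rw [hind]
  exact (aemeasurable_indicator_iff hX1).mpr h1

lemma integral_density (p : ℝ → ℝ) (hpd : IsProbDensity p) (hpm : AEMeasurable p (volume : Measure ℝ))
    (z : ℤ) :
    ∫ y, Complex.exp (-(Complex.I * z * y)) ∂(volume.withDensity fun x => ENNReal.ofReal (p x))
      = fc (fun x => (p x : ℂ)) z := by
  have h1 : (fun x => ENNReal.ofReal (p x)) = fun x => ((Real.toNNReal (p x) : ℝ≥0) : ℝ≥0∞) := rfl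
  rw [h1, integral_withDensity_eq_integral_smul₀ (f := fun x => (p x).toNNReal) (measurable_real_toNNReal.comp_aemeasurable hpm)]
  have h2 : ∀ x : ℝ, (Real.toNNReal (p x)) • Complex.exp (-(Complex.I * z * x))
      = Complex.exp (-(Complex.I * z * x)) * (p x : ℂ) := by
    intro x
    rw [NNReal.smul_def, Real.coe_toNNReal _ (hpd.1 x), Complex.real_smul]
    ring
  simp_rw [h2]
  rw [fc]
  symm
  apply setIntegral_eq_integral_of_forall_compl_eq_zero
  intro x hx
  simp [hpd.2.1 x hx]

lemma char_expect {Ω : Type} [MeasurableSpace Ω] (μ : Measure Ω) (V : Ω → ℝ) (p : ℝ → ℝ)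
    (hV : HasDensity μ V p) (hpd : IsProbDensity p) (hpm : AEMeasurable p (volume : Measure ℝ))
    (z : ℤ) :
    ∫ ω, Complex.exp (-(Complex.I * z * (V ω))) ∂μ = fc (fun x => (p x : ℂ)) z := by
  have hcont : Continuous fun y : ℝ => Complex.exp (-(Complex.I * z * y)) := by fun_prop
  rw [← integral_map hV.1.aemeasurable hcont.aestronglyMeasurable, hV.2]
  exact integral_density p hpd hpm z

lemma prod_expect {Ω : Type} [MeasurableSpace Ω] (μ : Measure Ω) [IsProbabilityMeasure μ]
    (V W : Ω → ℝ) (p q : ℝ → ℝ) (hV : HasDensity μ V p) (hW : HasDensity μ W q)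
    (hpd : IsProbDensity p) (hqd : IsProbDensity q)
    (hpm : AEMeasurable p (volume : Measure ℝ)) (hqm : AEMeasurable q (volume : Measure ℝ))
    (hindep : IndepFun V W μ) (z : ℤ) :
    ∫ ω, Complex.exp (-(Complex.I * z * (V ω))) * conj (Complex.exp (-(Complex.I * z * (W ω)))) ∂μ
      = fc (fun x => (p x : ℂ)) z * conj (fc (fun x => (q x : ℂ)) z) := by
  have hVm := hV.1; have hWm := hW.1
  have hmap := (indepFun_iff_map_prod_eq_prod_map_map hVm.aemeasurable hWm.aemeasurable).mp hindep
  have hc1 : Continuous fun y : ℝ => Complex.exp (-(Complex.I * z * y)) := by fun_prop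
  have hc2 : Continuous fun y : ℝ => conj (Complex.exp (-(Complex.I * z * y))) :=
    Complex.continuous_conj.comp hc1
  have hcont : Continuous fun pr : ℝ × ℝ =>
      Complex.exp (-(Complex.I * z * pr.1)) * conj (Complex.exp (-(Complex.I * z * pr.2))) :=
    (hc1.comp continuous_fst).mul (hc2.comp continuous_snd)
  haveI : IsProbabilityMeasure (μ.map V) := Measure.isProbabilityMeasure_map hVm.aemeasurable
  haveI : IsProbabilityMeasure (μ.map W) := Measure.isProbabilityMeasure_map hWm.aemeasurable
  calc ∫ ω, Complex.exp (-(Complex.I * z * (V ω))) *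
          conj (Complex.exp (-(Complex.I * z * (W ω)))) ∂μ
      = ∫ pr : ℝ × ℝ, Complex.exp (-(Complex.I * z * pr.1)) *
          conj (Complex.exp (-(Complex.I * z * pr.2)))
          ∂(μ.map (fun ω => (V ω, W ω))) :=
        (integral_map (hVm.prodMk hWm).aemeasurable hcont.aestronglyMeasurable).symm
    _ = ∫ pr : ℝ × ℝ, Complex.exp (-(Complex.I * z * pr.1)) *
          conj (Complex.exp (-(Complex.I * z * pr.2)))
          ∂((μ.map V).prod (μ.map W)) := by rw [hmap]
    _ = (∫ x, Complex.exp (-(Complex.I * z * x)) ∂(μ.map V)) *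
          ∫ y, conj (Complex.exp (-(Complex.I * z * y))) ∂(μ.map W) := by
        exact integral_prod_mul (L := ℂ) (fun x : ℝ => Complex.exp (-(Complex.I * z * x)))
          (fun y : ℝ => conj (Complex.exp (-(Complex.I * z * y))))
    _ = fc (fun x => (p x : ℂ)) z * conj (fc (fun x => (q x : ℂ)) z) := by
        rw [integral_conj, hV.2, hW.2, integral_density p hpd hpm z, integral_density q hqd hqm z]

lemma estS_expect (s : ℝ) (p q : ℝ → ℝ) (hpd : IsProbDensity p) (hqd : IsProbDensity q)
    (hpm : AEMeasurable p (volume : Measure ℝ)) (hqm : AEMeasurable q (volume : Measure ℝ))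
    (n : ℕ) (hn : 1 ≤ n) (Z : ℤ)
    (Ω : Type) [MeasurableSpace Ω] (μ : Measure Ω) [IsProbabilityMeasure μ]
    (X Y : Fin n → Ω → ℝ)
    (hX : ∀ j, HasDensity μ (X j) p) (hY : ∀ j, HasDensity μ (Y j) q)
    (hind : iIndepFun (Sum.elim X Y) μ) :
    ∫ ω, estS s n Z X Y ω ∂μ = ∑ z ∈ Finset.Icc (-Z) Z,
      (wt s z : ℂ) * fc (fun x => (p x : ℂ)) z * conj (fc (fun x => (q x : ℂ)) z) := by
  have hn0 : (n : ℂ) ≠ 0 := Nat.cast_ne_zero.mpr (by omega)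
  -- pointwise rewriting of each z-term as a double sum
  have hpt : ∀ (z : ℤ) (ω : Ω), (wt s z : ℂ) * hatc n X z ω * conj (hatc n Y z ω)
      = ∑ j : Fin n, ∑ k : Fin n, ((wt s z : ℂ) * ((n : ℂ)⁻¹ * (n : ℂ)⁻¹)) *
          (Complex.exp (-(Complex.I * z * X j ω)) *
            conj (Complex.exp (-(Complex.I * z * Y k ω)))) := by
    intro z ω
    simp only [hatc, map_mul, map_inv₀, map_natCast, map_sum, Finset.mul_sum, Finset.sum_mul]
    rw [Finset.sum_comm]
    exact Finset.sum_congr rfl fun j _ => Finset.sum_congr rfl fun k _ => by ring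
  -- integrability of elementary products
  have hc1 : ∀ z : ℤ, Continuous fun y : ℝ => Complex.exp (-(Complex.I * z * y)) := by
    intro z; fun_prop
  have hint : ∀ (z : ℤ) (j k : Fin n), Integrable (fun ω =>
      Complex.exp (-(Complex.I * z * X j ω)) *
        conj (Complex.exp (-(Complex.I * z * Y k ω)))) μ := by
    intro z j k
    have hmeas : AEStronglyMeasurable (fun ω =>
        Complex.exp (-(Complex.I * z * X j ω)) *
          conj (Complex.exp (-(Complex.I * z * Y k ω)))) μ := by
      apply Measurable.aestronglyMeasurable
      exact (((hc1 z).measurable).comp (hX j).1).mul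
        ((Complex.continuous_conj.comp (hc1 z)).measurable.comp (hY k).1)
    apply Integrable.mono' (integrable_const (1 : ℝ)) hmeas
    filter_upwards with ω
    simp [Complex.norm_exp]
  -- expectation of elementary products
  have hexp : ∀ (z : ℤ) (j k : Fin n), (∫ ω, Complex.exp (-(Complex.I * z * X j ω)) *
        conj (Complex.exp (-(Complex.I * z * Y k ω))) ∂μ)
      = fc (fun x => (p x : ℂ)) z * conj (fc (fun x => (q x : ℂ)) z) := by
    intro z j k
    have hij : (Sum.inl j : Fin n ⊕ Fin n) ≠ Sum.inr k := by simp
    have hindep : IndepFun (X j) (Y k) μ := hind.indepFun hij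
    exact prod_expect μ (X j) (Y k) p q (hX j) (hY k) hpd hqd hpm hqm hindep z
  -- put together
  rw [show (fun ω => estS s n Z X Y ω) = fun ω => ∑ z ∈ Finset.Icc (-Z) Z,
      ∑ j : Fin n, ∑ k : Fin n, ((wt s z : ℂ) * ((n : ℂ)⁻¹ * (n : ℂ)⁻¹)) *
        (Complex.exp (-(Complex.I * z * X j ω)) *
          conj (Complex.exp (-(Complex.I * z * Y k ω)))) by
    funext ω; rw [estS]; exact Finset.sum_congr rfl fun z _ => hpt z ω]
  rw [integral_finset_sum _ (fun z _ => integrable_finset_sum _ (fun j _ =>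
    integrable_finset_sum _ (fun k _ => ((hint z j k).const_mul _))))]
  refine Finset.sum_congr rfl fun z _ => ?_
  rw [integral_finset_sum _ (fun j _ => integrable_finset_sum _
    (fun k _ => ((hint z j k).const_mul _)))]
  have : ∀ j : Fin n, (∫ ω, ∑ k : Fin n, ((wt s z : ℂ) * ((n : ℂ)⁻¹ * (n : ℂ)⁻¹)) *
      (Complex.exp (-(Complex.I * z * X j ω)) *
        conj (Complex.exp (-(Complex.I * z * Y k ω)))) ∂μ)
      = (n : ℂ) * (((wt s z : ℂ) * ((n : ℂ)⁻¹ * (n : ℂ)⁻¹)) *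
          (fc (fun x => (p x : ℂ)) z * conj (fc (fun x => (q x : ℂ)) z))) := by
    intro j
    rw [integral_finset_sum _ (fun k _ => ((hint z j k).const_mul _))]
    rw [Finset.sum_congr rfl (fun k _ => by rw [integral_const_mul, hexp z j k])]
    simp [Finset.sum_const, nsmul_eq_mul]
  rw [Finset.sum_congr rfl (fun j _ => this j)]
  simp only [Finset.sum_const, Finset.card_univ, Fintype.card_fin, nsmul_eq_mul]
  field_simp

lemma tsum_mul_le_sqrt {u v : ℤ → ℝ} (hu0 : ∀ z, 0 ≤ u z) (hv0 : ∀ z, 0 ≤ v z)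
    (hu : Summable fun z => u z ^ 2) (hv : Summable fun z => v z ^ 2) :
    Summable (fun z => u z * v z) ∧
      ∑' z, u z * v z ≤ Real.sqrt (∑' z, u z ^ 2) * Real.sqrt (∑' z, v z ^ 2) := by
  have hsum : Summable (fun z => u z * v z) := by
    apply Summable.of_nonneg_of_le (fun z => mul_nonneg (hu0 z) (hv0 z))
      (fun z => ?_) ((hu.add hv).div_const 2)
    nlinarith [two_mul_le_add_sq (u z) (v z)]
  refine ⟨hsum, ?_⟩
  set A := ∑' z, u z ^ 2 with hA
  set B := ∑' z, v z ^ 2 with hB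
  have hA0 : 0 ≤ A := tsum_nonneg fun z => sq_nonneg _
  have hB0 : 0 ≤ B := tsum_nonneg fun z => sq_nonneg _
  rcases eq_or_lt_of_le hA0 with hAz | hApos
  · have hz : ∀ z, u z = 0 := by
      intro z
      have h1 : u z ^ 2 ≤ A := Summable.le_tsum hu z fun w _ => sq_nonneg _
      nlinarith [hu0 z]
    have : (fun z : ℤ => u z * v z) = fun _ => 0 := funext fun z => by rw [hz z]; ring
    rw [this, tsum_zero]
    positivity
  rcases eq_or_lt_of_le hB0 with hBz | hBpos
  · have hz : ∀ z, v z = 0 := by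
      intro z
      have h1 : v z ^ 2 ≤ B := Summable.le_tsum hv z fun w _ => sq_nonneg _
      nlinarith [hv0 z]
    have : (fun z : ℤ => u z * v z) = fun _ => 0 := funext fun z => by rw [hz z]; ring
    rw [this, tsum_zero]
    positivity
  set t : ℝ := Real.sqrt B / Real.sqrt A with ht
  have hsA : 0 < Real.sqrt A := Real.sqrt_pos.mpr hApos
  have hsB : 0 < Real.sqrt B := Real.sqrt_pos.mpr hBpos
  have htpos : 0 < t := div_pos hsB hsA
  have hle : ∀ z, u z * v z ≤ (t * u z ^ 2 + t⁻¹ * v z ^ 2) / 2 := by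
    intro z
    have h := sq_nonneg (Real.sqrt t * u z - Real.sqrt t⁻¹ * v z)
    have h2 : Real.sqrt t ^ 2 = t := Real.sq_sqrt htpos.le
    have h3 : Real.sqrt t⁻¹ ^ 2 = t⁻¹ := Real.sq_sqrt (inv_nonneg.mpr htpos.le)
    have h4 : Real.sqrt t * Real.sqrt t⁻¹ = 1 := by
      rw [← Real.sqrt_mul htpos.le, mul_inv_cancel₀ htpos.ne', Real.sqrt_one]
    have hexp : t * u z ^ 2 + t⁻¹ * v z ^ 2 - 2 * (u z * v z)
        = (Real.sqrt t * u z - Real.sqrt t⁻¹ * v z) ^ 2 := by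
      have e : (Real.sqrt t * u z - Real.sqrt t⁻¹ * v z) ^ 2
          = Real.sqrt t ^ 2 * u z ^ 2 - 2 * (Real.sqrt t * Real.sqrt t⁻¹) * (u z * v z)
            + Real.sqrt t⁻¹ ^ 2 * v z ^ 2 := by ring
      rw [e, h2, h3, h4]; ring
    linarith [hexp ▸ h]
  have hsum2 : Summable fun z => (t * u z ^ 2 + t⁻¹ * v z ^ 2) / 2 :=
    ((hu.mul_left t).add (hv.mul_left t⁻¹)).div_const 2
  calc ∑' z, u z * v z ≤ ∑' z, (t * u z ^ 2 + t⁻¹ * v z ^ 2) / 2 :=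
        Summable.tsum_le_tsum hle hsum hsum2
    _ = (t * A + t⁻¹ * B) / 2 := by
        rw [tsum_div_const, Summable.tsum_add (hu.mul_left t) (hv.mul_left t⁻¹),
          tsum_mul_left, tsum_mul_left]
    _ = Real.sqrt A * Real.sqrt B := by
        have e1 : t * A = Real.sqrt A * Real.sqrt B := by
          rw [ht]
          field_simp
          nlinarith [Real.sq_sqrt hA0, Real.sq_sqrt hB0, Real.sq_sqrt hApos.le]
        have e2 : t⁻¹ * B = Real.sqrt A * Real.sqrt B := by
          rw [ht, inv_div]
          field_simp
          nlinarith [Real.sq_sqrt hB0]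
        rw [e1, e2]; ring

lemma cs_lemma {w c d : ℤ → ℝ} (hw : ∀ z, 0 ≤ w z) (hc : ∀ z, 0 ≤ c z) (hd : ∀ z, 0 ≤ d z)
    (h1 : Summable fun z => w z * c z ^ 2) (h2 : Summable fun z => w z * d z ^ 2) :
    Summable (fun z => w z * (c z * d z)) ∧
      ∑' z, w z * (c z * d z) ≤
        Real.sqrt (∑' z, w z * c z ^ 2) * Real.sqrt (∑' z, w z * d z ^ 2) := by
  have hu2 : ∀ z, (Real.sqrt (w z) * c z) ^ 2 = w z * c z ^ 2 := fun z => by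
    rw [mul_pow, Real.sq_sqrt (hw z)]
  have hv2 : ∀ z, (Real.sqrt (w z) * d z) ^ 2 = w z * d z ^ 2 := fun z => by
    rw [mul_pow, Real.sq_sqrt (hw z)]
  have huv : ∀ z, (Real.sqrt (w z) * c z) * (Real.sqrt (w z) * d z) = w z * (c z * d z) :=
    fun z => by
      have h := Real.mul_self_sqrt (hw z)
      linear_combination c z * d z * h
  have key := tsum_mul_le_sqrt (u := fun z => Real.sqrt (w z) * c z)
    (v := fun z => Real.sqrt (w z) * d z)
    (fun z => mul_nonneg (Real.sqrt_nonneg _) (hc z))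
    (fun z => mul_nonneg (Real.sqrt_nonneg _) (hd z))
    (by simpa only [hu2] using h1) (by simpa only [hv2] using h2)
  rw [show (fun z => Real.sqrt (w z) * c z * (Real.sqrt (w z) * d z))
      = fun z => w z * (c z * d z) from funext huv] at key
  rwa [tsum_congr (f := fun z => (Real.sqrt (w z) * c z) ^ 2) hu2,
    tsum_congr (f := fun z => (Real.sqrt (w z) * d z) ^ 2) hv2] at key

/-- **Bias bound.** For `0 ≤ s < s'` and probability densities
`p, q ∈ H^{s'}([-π,π])`,
`|E[Ŝ_n] − ⟨p, q⟩_{H^s}| ≤ ‖p‖_{H^{s'}} ‖q‖_{H^{s'}} Z_n^{2(s − s')}`. -/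
theorem bias_bound (s s' : ℝ) (hs : 0 ≤ s) (hss' : s < s')
    (p q : ℝ → ℝ) (hpd : IsProbDensity p) (hqd : IsProbDensity q)
    (hp : MemHs s' (fun x => (p x : ℂ))) (hq : MemHs s' (fun x => (q x : ℂ)))
    (n : ℕ) (hn : 1 ≤ n) (Z : ℤ) (hZ : 1 ≤ Z)
    (Ω : Type) [MeasurableSpace Ω] (μ : Measure Ω) [IsProbabilityMeasure μ]
    (X Y : Fin n → Ω → ℝ)
    (hX : ∀ j, HasDensity μ (X j) p) (hY : ∀ j, HasDensity μ (Y j) q)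
    (hind : iIndepFun (Sum.elim X Y) μ) :
    ‖(∫ ω, estS s n Z X Y ω ∂μ) -
        innerHs s (fun x => (p x : ℂ)) (fun x => (q x : ℂ))‖ ≤
      Real.sqrt (normHsSq s' (fun x => (p x : ℂ))) *
        Real.sqrt (normHsSq s' (fun x => (q x : ℂ))) * (Z : ℝ) ^ (2 * (s - s')) := by
  have hpm : AEMeasurable p (volume : Measure ℝ) := pf_aemeas p hpd hp.1.aestronglyMeasurable
  have hqm : AEMeasurable q (volume : Measure ℝ) := pf_aemeas q hqd hq.1.aestronglyMeasurable
  rw [estS_expect s p q hpd hqd hpm hqm n hn Z Ω μ X Y hX hY hind]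
  simp only [innerHs, normHsSq]
  set cp : ℤ → ℝ := fun z => ‖fc (fun x => (p x : ℂ)) z‖ with hcp
  set cq : ℤ → ℝ := fun z => ‖fc (fun x => (q x : ℂ)) z‖ with hcq
  set F : ℤ → ℂ := fun z =>
    (wt s z : ℂ) * fc (fun x => (p x : ℂ)) z * conj (fc (fun x => (q x : ℂ)) z) with hFdef
  have hwt : ∀ (r : ℝ) (z : ℤ), 0 ≤ wt r z := fun r z => Real.rpow_nonneg (sq_nonneg _) r
  have cp0 : ∀ z, 0 ≤ cp z := fun z => norm_nonneg _
  have cq0 : ∀ z, 0 ≤ cq z := fun z => norm_nonneg _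
  have hZ0 : (0:ℝ) ≤ (Z:ℝ) := by exact_mod_cast (by omega : (0:ℤ) ≤ Z)
  have hC0 : 0 ≤ (Z:ℝ) ^ (2 * (s - s')) := Real.rpow_nonneg hZ0 _
  obtain ⟨hg_sum, hg_le⟩ := cs_lemma (w := fun z => wt s' z) (c := cp) (d := cq)
    (fun z => hwt s' z) cp0 cq0 hp.2 hq.2
  -- |F z|
  have habsF : ∀ z, ‖F z‖ = wt s z * (cp z * cq z) := by
    intro z
    rw [hFdef]
    rw [norm_mul, norm_mul, Complex.norm_real, Complex.norm_conj, Real.norm_of_nonneg (hwt s z)]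
    ring
  -- summability of the s-weighted series
  have hh_sum : Summable (fun z => wt s z * (cp z * cq z)) := by
    have hbound : Summable (fun z : ℤ => wt s' z * (cp z * cq z) +
        Set.indicator ({0} : Set ℤ) (fun w => wt s w * (cp w * cq w)) z) :=
      hg_sum.add (summable_of_finite_support
        ((Set.finite_singleton (0:ℤ)).subset Set.support_indicator_subset))
    apply Summable.of_nonneg_of_le
      (fun z => mul_nonneg (hwt s z) (mul_nonneg (cp0 z) (cq0 z))) (fun z => ?_) hbound
    by_cases hz : z = 0
    · subst hz
      rw [Set.indicator_of_mem (Set.mem_singleton 0)]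
      have := mul_nonneg (hwt s' 0) (mul_nonneg (cp0 0) (cq0 0))
      linarith
    · rw [Set.indicator_of_notMem (by simpa using hz)]
      have h1 : (1:ℝ) ≤ (z:ℝ) ^ 2 := by
        have h0 : (1:ℤ) ≤ z ^ 2 := by nlinarith [Int.one_le_abs hz, sq_abs z, abs_nonneg z]
        exact_mod_cast h0
      have h2 : wt s z ≤ wt s' z := Real.rpow_le_rpow_of_exponent_le h1 hss'.le
      have h3 := mul_le_mul_of_nonneg_right h2 (mul_nonneg (cp0 z) (cq0 z))
      linarith
  have hF_sum : Summable F := by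
    apply Summable.of_norm
    have he : (fun z => ‖F z‖) = fun z => wt s z * (cp z * cq z) := funext fun z => by
      rw [habsF z]
    rw [he]; exact hh_sum
  -- rewrite the difference as minus the tail
  have hkey := Summable.sum_add_tsum_compl (s := Finset.Icc (-Z) Z) hF_sum
  have hrw : (∑ z ∈ Finset.Icc (-Z) Z, F z) - (∑' z, F z)
      = -∑' z : (((Finset.Icc (-Z) Z : Finset ℤ) : Set ℤ)ᶜ : Set ℤ), F ↑z := by
    rw [← hkey]; ring
  rw [hrw, norm_neg]
  -- termwise tail bound on the weights
  have htail : ∀ z : ℤ, z ∉ Finset.Icc (-Z) Z →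
      wt s z ≤ (Z:ℝ) ^ (2 * (s - s')) * wt s' z := by
    intro z hzmem
    have hz' : ¬(-Z ≤ z ∧ z ≤ Z) := by simpa [Finset.mem_Icc] using hzmem
    have hzsq : (Z:ℤ) ^ 2 ≤ z ^ 2 := by
      rcases not_and_or.mp hz' with h | h
      · push_neg at h; nlinarith
      · push_neg at h; nlinarith
    have hZ1 : (1:ℝ) ≤ (Z:ℝ) := by exact_mod_cast hZ
    have hZ2 : (0:ℝ) < ((Z:ℝ)) ^ 2 := by nlinarith
    have hzsq' : ((Z:ℝ)) ^ 2 ≤ ((z:ℝ)) ^ 2 := by exact_mod_cast hzsq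
    have h1 : wt s z = ((z:ℝ) ^ 2) ^ (s - s') * ((z:ℝ) ^ 2) ^ s' := by
      rw [wt, ← Real.rpow_add (lt_of_lt_of_le hZ2 hzsq'), sub_add_cancel]
    have h2 : ((z:ℝ) ^ 2) ^ (s - s') ≤ ((Z:ℝ) ^ 2) ^ (s - s') :=
      Real.rpow_le_rpow_of_nonpos hZ2 hzsq' (by linarith)
    have h3 : ((Z:ℝ) ^ 2) ^ (s - s') = (Z:ℝ) ^ (2 * (s - s')) := by
      rw [← Real.rpow_natCast (Z:ℝ) 2, ← Real.rpow_mul hZ0]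
      norm_num
    rw [h1, wt]
    calc ((z:ℝ) ^ 2) ^ (s - s') * ((z:ℝ) ^ 2) ^ s'
        ≤ ((Z:ℝ) ^ 2) ^ (s - s') * ((z:ℝ) ^ 2) ^ s' :=
          mul_le_mul_of_nonneg_right h2 (Real.rpow_nonneg (sq_nonneg _) _)
      _ = (Z:ℝ) ^ (2 * (s - s')) * ((z:ℝ) ^ 2) ^ s' := by rw [h3]
  -- bound the tail sum
  have hnormsub : Summable (fun z : (((Finset.Icc (-Z) Z : Finset ℤ) : Set ℤ)ᶜ : Set ℤ) => ‖F ↑z‖) := by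
    apply Summable.congr (hh_sum.subtype (((Finset.Icc (-Z) Z : Finset ℤ) : Set ℤ)ᶜ : Set ℤ))
    intro z
    show ((fun w : ℤ => wt s w * (cp w * cq w)) ∘ (Subtype.val : (((Finset.Icc (-Z) Z : Finset ℤ) : Set ℤ)ᶜ : Set ℤ) → ℤ)) z = ‖F z.1‖
    simp only [Function.comp_apply]
    rw [habsF]
  calc ‖∑' z : (((Finset.Icc (-Z) Z : Finset ℤ) : Set ℤ)ᶜ : Set ℤ), F ↑z‖
      ≤ ∑' z : (((Finset.Icc (-Z) Z : Finset ℤ) : Set ℤ)ᶜ : Set ℤ), ‖F ↑z‖ := norm_tsum_le_tsum_norm hnormsub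
    _ = ∑' z : (((Finset.Icc (-Z) Z : Finset ℤ) : Set ℤ)ᶜ : Set ℤ), wt s ↑z * (cp ↑z * cq ↑z) :=
        tsum_congr fun z => by rw [habsF]
    _ ≤ ∑' z : (((Finset.Icc (-Z) Z : Finset ℤ) : Set ℤ)ᶜ : Set ℤ),
          (Z:ℝ) ^ (2 * (s - s')) * (wt s' ↑z * (cp ↑z * cq ↑z)) := by
        apply Summable.tsum_le_tsum ?_ (hh_sum.subtype _) ((hg_sum.mul_left _).subtype _)
        intro z
        calc wt s ↑z * (cp ↑z * cq ↑z)
            ≤ ((Z:ℝ) ^ (2 * (s - s')) * wt s' ↑z) * (cp ↑z * cq ↑z) :=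
              mul_le_mul_of_nonneg_right (htail ↑z (by simpa using z.2)) (mul_nonneg (cp0 _) (cq0 _))
          _ = (Z:ℝ) ^ (2 * (s - s')) * (wt s' ↑z * (cp ↑z * cq ↑z)) := by ring
    _ = (Z:ℝ) ^ (2 * (s - s')) *
          ∑' z : (((Finset.Icc (-Z) Z : Finset ℤ) : Set ℤ)ᶜ : Set ℤ), wt s' ↑z * (cp ↑z * cq ↑z) := tsum_mul_left
    _ ≤ (Z:ℝ) ^ (2 * (s - s')) * ∑' z, wt s' z * (cp z * cq z) := by
        apply mul_le_mul_of_nonneg_left ?_ hC0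
        have hkey2 := Summable.sum_add_tsum_compl (s := Finset.Icc (-Z) Z) hg_sum
        have hfin0 : 0 ≤ ∑ z ∈ Finset.Icc (-Z) Z, wt s' z * (cp z * cq z) :=
          Finset.sum_nonneg fun z _ => mul_nonneg (hwt s' z) (mul_nonneg (cp0 z) (cq0 z))
        linarith
    _ ≤ (Z:ℝ) ^ (2 * (s - s')) *
          (Real.sqrt (∑' z, wt s' z * cp z ^ 2) * Real.sqrt (∑' z, wt s' z * cq z ^ 2)) :=
        mul_le_mul_of_nonneg_left hg_le hC0
    _ = Real.sqrt (∑' z, wt s' z * cp z ^ 2) * Real.sqrt (∑' z, wt s' z * cq z ^ 2) *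
          (Z:ℝ) ^ (2 * (s - s')) := by ring

end
end

section
/- Let s ∈ [0,∞), D ≥ 1, Z ≥ 1 an integer, and let p, q ∈ L²(X) be real-valued. Then |Σ_{‖y‖_∞ ≤ Z} Σ_{‖z‖_∞ ≤ Z} y^{2s} z^{2s} c_p(y − z) c_q(z − y)| ≤ (2π)^D · ‖p‖_{L²} · ‖q‖_{L²} · Σ_{‖z‖_∞ ≤ Z} z^{4s}, where z^{4s} := Π_{j=1}^D (z_j²)^{2s}. -/
open MeasureTheory ProbabilityTheory Filter Topology ComplexConjugate BoundedContinuousFunction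

noncomputable section

/-- The `L²` norm of a real-valued function on `[-π,π]^D`. -/
def l2normD {D : ℕ} (f : (Fin D → ℝ) → ℝ) : ℝ :=
  Real.sqrt (∫ x in XD D, (f x) ^ 2)

/-! ### Auxiliary lemmas -/

lemma integral_exp_Icc' (k : ℤ) :
    ∫ t in Set.Icc (-Real.pi) Real.pi, Complex.exp (Complex.I * k * t) =
      if k = 0 then ((2 * Real.pi : ℝ) : ℂ) else 0 := by
  have hle : -Real.pi ≤ Real.pi := by linarith [Real.pi_pos]
  rw [MeasureTheory.integral_Icc_eq_integral_Ioc, ← intervalIntegral.integral_of_le hle]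
  by_cases hk : k = 0
  · simp [hk, sub_neg_eq_add, two_mul]
  · have hc : (Complex.I * k) ≠ 0 := by
      simp [Complex.I_ne_zero, hk]
    rw [if_neg hk]
    have heq : ∀ t : ℝ, Complex.exp (Complex.I * k * t) = Complex.exp ((Complex.I * k) * t) := by
      intro t; ring_nf
    have := integral_exp_mul_complex (a := -Real.pi) (b := Real.pi) hc
    rw [this]
    have h1 : Complex.exp ((Complex.I * k) * ((-Real.pi : ℝ) : ℂ)) =
        Complex.exp ((Complex.I * k) * ((Real.pi : ℝ) : ℂ)) := by
      have : (Complex.I * k) * ((-Real.pi : ℝ) : ℂ) =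
          (Complex.I * k) * ((Real.pi : ℝ) : ℂ) - (k : ℂ) * (2 * (Real.pi : ℂ) * Complex.I) := by
        push_cast; ring
      rw [this, Complex.exp_sub, Complex.exp_int_mul_two_pi_mul_I, div_one]
    rw [h1, sub_self, zero_div]

lemma measurableSet_XD (D : ℕ) : MeasurableSet (XD D) :=
  MeasurableSet.univ_pi fun _ => measurableSet_Icc

lemma integral_exp_dot {D : ℕ} (k : Fin D → ℤ) :
    ∫ x in XD D, Complex.exp (Complex.I * (dotZ k x : ℝ)) =
      if k = 0 then (((2 * Real.pi) ^ D : ℝ) : ℂ) else 0 := by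
  rw [← MeasureTheory.integral_indicator (measurableSet_XD D)]
  have hind : (XD D).indicator (fun x => Complex.exp (Complex.I * (dotZ k x : ℝ))) =
      fun x => ∏ j, (Set.Icc (-Real.pi) Real.pi).indicator
        (fun t : ℝ => Complex.exp (Complex.I * (k j) * t)) (x j) := by
    funext x
    by_cases hx : x ∈ XD D
    · rw [Set.indicator_of_mem hx]
      have hxj : ∀ j, x j ∈ Set.Icc (-Real.pi) Real.pi := fun j => hx j (Set.mem_univ j)
      have : ∀ j, (Set.Icc (-Real.pi) Real.pi).indicator
          (fun t : ℝ => Complex.exp (Complex.I * (k j) * t)) (x j)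
          = Complex.exp (Complex.I * (k j) * (x j)) := fun j =>
        Set.indicator_of_mem (hxj j) _
      rw [Finset.prod_congr rfl fun j _ => this j, ← Complex.exp_sum]
      congr 1
      unfold dotZ
      push_cast
      rw [Finset.mul_sum]
      exact Finset.sum_congr rfl fun j _ => by ring
    · rw [Set.indicator_of_notMem hx]
      have : ∃ j, x j ∉ Set.Icc (-Real.pi) Real.pi := by
        by_contra h
        push_neg at h
        exact hx fun j _ => h j
      obtain ⟨j, hj⟩ := this
      exact (Finset.prod_eq_zero (Finset.mem_univ j)
        (Set.indicator_of_notMem hj _)).symm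
  rw [hind]
  beta_reduce
  rw [MeasureTheory.volume_pi, MeasureTheory.integral_fintype_prod_eq_prod
    (fun j (t : ℝ) => (Set.Icc (-Real.pi) Real.pi).indicator
      (fun u : ℝ => Complex.exp (Complex.I * (k j) * u)) t)]
  have hfac : ∀ j, (∫ t : ℝ, (Set.Icc (-Real.pi) Real.pi).indicator
      (fun u : ℝ => Complex.exp (Complex.I * (k j) * u)) t)
      = if k j = 0 then ((2 * Real.pi : ℝ) : ℂ) else 0 := by
    intro j
    rw [MeasureTheory.integral_indicator measurableSet_Icc]
    exact integral_exp_Icc' (k j)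
  rw [Finset.prod_congr rfl fun j _ => hfac j]
  by_cases hk : k = 0
  · simp [hk, Finset.prod_const]
  · rw [if_neg hk]
    have : ∃ j, k j ≠ 0 := by
      by_contra h
      push_neg at h
      exact hk (funext h)
    obtain ⟨j, hj⟩ := this
    exact Finset.prod_eq_zero (Finset.mem_univ j) (if_neg hj)


lemma finiteXD (D : ℕ) : IsFiniteMeasure (volume.restrict (XD D)) := by
  constructor
  rw [Measure.restrict_apply_univ]
  exact ((isCompact_univ_pi fun _ : Fin D => isCompact_Icc).measure_lt_top)

lemma continuous_dotZ {D : ℕ} (m : Fin D → ℤ) : Continuous fun x : Fin D → ℝ => dotZ m x := by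
  unfold dotZ
  exact continuous_finset_sum _ fun j _ => continuous_const.mul (continuous_apply j)

lemma besselD {D : ℕ} (p : (Fin D → ℝ) → ℝ)
    (hp : MemLp (fun x => (p x : ℂ)) 2 (volume.restrict (XD D)))
    (F : Finset (Fin D → ℤ)) :
    ∑ m ∈ F, ‖fcD (fun x => (p x : ℂ)) m‖ ^ 2 ≤
      (2 * Real.pi) ^ D * (l2normD p) ^ 2 := by
  classical
  set μ := volume.restrict (XD D) with hμ
  haveI : IsFiniteMeasure μ := finiteXD D
  set c : ℝ := (2 * Real.pi) ^ D with hcdef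
  have hc : 0 < c := by positivity
  -- the normalized exponentials
  set e : (Fin D → ℤ) → (Fin D → ℝ) → ℂ :=
    fun m x => ((Real.sqrt c)⁻¹ : ℝ) * Complex.exp (Complex.I * (dotZ m x : ℝ)) with hedef
  have hcont : ∀ m, Continuous (e m) := by
    intro m
    exact continuous_const.mul (Complex.continuous_exp.comp
      (continuous_const.mul (Complex.continuous_ofReal.comp (continuous_dotZ m))))
  have habs : ∀ (m : Fin D → ℤ) (x : Fin D → ℝ), ‖Complex.exp (Complex.I * (dotZ m x : ℝ))‖ = 1 := by
    intro m x
    rw [Complex.norm_exp]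
    simp [Complex.mul_re]
  have he : ∀ m, MemLp (e m) 2 μ := by
    intro m
    refine MemLp.of_bound (hcont m).aestronglyMeasurable ((Real.sqrt c)⁻¹) ?_
    filter_upwards with x
    rw [hedef]
    simp only [norm_mul, Complex.norm_real, Real.norm_eq_abs, habs m x, mul_one]
    rw [abs_of_nonneg (by positivity)]
  -- conj of e
  have hconj : ∀ (m : Fin D → ℤ) (x : Fin D → ℝ), (starRingEnd ℂ) (e m x) =
      ((Real.sqrt c)⁻¹ : ℝ) * Complex.exp (-(Complex.I * (dotZ m x : ℝ))) := by
    intro m x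
    rw [hedef]
    simp only [map_mul, Complex.conj_ofReal, ← Complex.exp_conj, map_mul, Complex.conj_I,
      Complex.conj_ofReal]
    ring_nf
  -- the Lp elements
  set E : (Fin D → ℤ) → Lp ℂ 2 μ := fun m => (he m).toLp (e m) with hEdef
  have hinner : ∀ m m', (inner ℂ (E m) (E m') : ℂ) =
      ∫ x, (starRingEnd ℂ) (e m x) * e m' x ∂μ := by
    intro m m'
    rw [MeasureTheory.L2.inner_def]
    apply integral_congr_ae
    filter_upwards [(he m).coeFn_toLp, (he m').coeFn_toLp] with x h1 h2
    simp only [hEdef]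
    rw [RCLike.inner_apply, h1, h2, mul_comm]
  have hON : Orthonormal ℂ E := by
    rw [orthonormal_iff_ite]
    intro m m'
    rw [hinner m m']
    have : ∀ x : Fin D → ℝ, (starRingEnd ℂ) (e m x) * e m' x =
        ((c⁻¹ : ℝ) : ℂ) * Complex.exp (Complex.I * (dotZ (m' - m) x : ℝ)) := by
      intro x
      have hdot : dotZ (m' - m) x = dotZ m' x - dotZ m x := by
        unfold dotZ
        rw [← Finset.sum_sub_distrib]
        refine Finset.sum_congr rfl fun j _ => ?_
        have : (m' - m) j = m' j - m j := rfl
        rw [this]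
        push_cast
        ring
      have hexp : Complex.exp (-(Complex.I * (dotZ m x : ℝ))) *
          Complex.exp (Complex.I * (dotZ m' x : ℝ)) =
          Complex.exp (Complex.I * (dotZ (m' - m) x : ℝ)) := by
        rw [← Complex.exp_add, hdot]
        congr 1
        push_cast
        ring
      have hsqrt : ((Real.sqrt c)⁻¹ : ℝ) * ((Real.sqrt c)⁻¹ : ℝ) = c⁻¹ := by
        rw [← mul_inv, Real.mul_self_sqrt hc.le]
      rw [hconj]
      simp only [hedef]
      rw [mul_mul_mul_comm, hexp, ← Complex.ofReal_mul, hsqrt]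
    rw [integral_congr_ae (Filter.Eventually.of_forall this), integral_const_mul]
    rw [hμ, integral_exp_dot (m' - m)]
    by_cases hmm : m = m'
    · rw [if_pos hmm, if_pos (by rw [hmm, sub_self])]
      rw [← hcdef]
      norm_cast
      rw [inv_mul_cancel₀ hc.ne']
    · rw [if_neg hmm, if_neg (fun h => hmm (by
        have := sub_eq_zero.mp h
        exact this.symm)), mul_zero]
  -- the Lp element for p
  set P : Lp ℂ 2 μ := hp.toLp _ with hPdef
  have hPinner : ∀ m, (inner ℂ (E m) P : ℂ) =
      ((Real.sqrt c)⁻¹ : ℝ) * fcD (fun x => (p x : ℂ)) m := by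
    intro m
    rw [MeasureTheory.L2.inner_def]
    have : ∫ x, (inner ℂ ((E m : Lp ℂ 2 μ) x) (P x) : ℂ) ∂μ =
        ∫ x, (starRingEnd ℂ) (e m x) * (p x : ℂ) ∂μ := by
      apply integral_congr_ae
      filter_upwards [(he m).coeFn_toLp, hp.coeFn_toLp] with x h1 h2
      simp only [hEdef, hPdef]
      rw [RCLike.inner_apply, h1, h2, mul_comm]
    rw [this]
    have : ∀ x, (starRingEnd ℂ) (e m x) * (p x : ℂ) =
        (((Real.sqrt c)⁻¹ : ℝ) : ℂ) * (Complex.exp (-(Complex.I * (dotZ m x : ℝ))) * (p x : ℂ)) := by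
      intro x
      rw [hconj]
      ring
    rw [integral_congr_ae (Filter.Eventually.of_forall this), integral_const_mul]
    rfl
  -- norm of P
  have hPnormsq : ‖P‖ ^ 2 = ∫ x, (p x) ^ 2 ∂μ := by
    have h1 : (inner ℂ P P : ℂ) = ((∫ x, (p x) ^ 2 ∂μ : ℝ) : ℂ) := by
      rw [MeasureTheory.L2.inner_def]
      have : ∫ x, (inner ℂ (P x) (P x) : ℂ) ∂μ = ∫ x, (((p x) ^ 2 : ℝ) : ℂ) ∂μ := by
        apply integral_congr_ae
        filter_upwards [hp.coeFn_toLp] with x h2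
        rw [hPdef, h2, RCLike.inner_apply, Complex.conj_ofReal]
        push_cast
        ring
      rw [this]
      exact integral_ofReal (𝕜 := ℂ)
    have h2 := @inner_self_eq_norm_sq ℂ _ _ _ _ P
    rw [h1] at h2
    rw [← h2]
    simp
  have hint_nonneg : 0 ≤ ∫ x in XD D, (p x) ^ 2 :=
    integral_nonneg fun x => sq_nonneg _
  have hl2 : (l2normD p) ^ 2 = ‖P‖ ^ 2 := by
    rw [hPnormsq]
    unfold l2normD
    rw [Real.sq_sqrt hint_nonneg]
  -- Bessel
  have hbessel := hON.sum_inner_products_le (s := F) P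
  have hterm : ∀ m, ‖(inner ℂ (E m) P : ℂ)‖ ^ 2 =
      c⁻¹ * ‖fcD (fun x => (p x : ℂ)) m‖ ^ 2 := by
    intro m
    rw [hPinner m]
    simp only [norm_mul, Complex.norm_real, Real.norm_eq_abs]
    rw [abs_of_nonneg (by positivity), mul_pow, inv_pow, Real.sq_sqrt hc.le]
  rw [Finset.sum_congr rfl fun m _ => hterm m, ← Finset.mul_sum] at hbessel
  rw [hl2]
  calc ∑ m ∈ F, ‖fcD (fun x => (p x : ℂ)) m‖ ^ 2
      = c * (c⁻¹ * ∑ m ∈ F, ‖fcD (fun x => (p x : ℂ)) m‖ ^ 2) := by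
        rw [← mul_assoc, mul_inv_cancel₀ hc.ne', one_mul]
    _ ≤ c * ‖P‖ ^ 2 := by
        exact mul_le_mul_of_nonneg_left hbessel hc.le


lemma l2normD_nonneg {D : ℕ} (f : (Fin D → ℝ) → ℝ) : 0 ≤ l2normD f := Real.sqrt_nonneg _

lemma cs_bound {D : ℕ} (p q : (Fin D → ℝ) → ℝ)
    (hp : MemLp (fun x => (p x : ℂ)) 2 (volume.restrict (XD D)))
    (hq : MemLp (fun x => (q x : ℂ)) 2 (volume.restrict (XD D)))
    (F : Finset (Fin D → ℤ)) (f g : (Fin D → ℤ) → (Fin D → ℤ))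
    (hf : Function.Injective f) (hg : Function.Injective g) :
    ∑ z ∈ F, ‖fcD (fun x => (p x : ℂ)) (f z)‖ *
        ‖fcD (fun x => (q x : ℂ)) (g z)‖ ≤
      (2 * Real.pi) ^ D * l2normD p * l2normD q := by
  classical
  set c : ℝ := (2 * Real.pi) ^ D with hcdef
  have hc : 0 ≤ c := by positivity
  set cp : (Fin D → ℤ) → ℝ := fun m => ‖fcD (fun x => (p x : ℂ)) m‖ with hcp
  set cq : (Fin D → ℤ) → ℝ := fun m => ‖fcD (fun x => (q x : ℂ)) m‖ with hcq
  have h1 : ∑ z ∈ F, (cp (f z)) ^ 2 ≤ c * (l2normD p) ^ 2 := by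
    have him := Finset.sum_image (f := fun m => (cp m) ^ 2) (g := f) (s := F)
      (fun a _ b _ h => hf h)
    rw [show ∑ z ∈ F, (cp (f z)) ^ 2 = ∑ m ∈ F.image f, (cp m) ^ 2 from him.symm]
    exact besselD p hp (F.image f)
  have h2 : ∑ z ∈ F, (cq (g z)) ^ 2 ≤ c * (l2normD q) ^ 2 := by
    have him := Finset.sum_image (f := fun m => (cq m) ^ 2) (g := g) (s := F)
      (fun a _ b _ h => hg h)
    rw [show ∑ z ∈ F, (cq (g z)) ^ 2 = ∑ m ∈ F.image g, (cq m) ^ 2 from him.symm]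
    exact besselD q hq (F.image g)
  have hA : 0 ≤ ∑ z ∈ F, cp (f z) * cq (g z) :=
    Finset.sum_nonneg fun z _ => mul_nonneg (norm_nonneg _) (norm_nonneg _)
  have hC : 0 ≤ c * l2normD p * l2normD q :=
    mul_nonneg (mul_nonneg hc (l2normD_nonneg p)) (l2normD_nonneg q)
  have hcs := Finset.sum_mul_sq_le_sq_mul_sq F (fun z => cp (f z)) (fun z => cq (g z))
  have hsq : (∑ z ∈ F, cp (f z) * cq (g z)) ^ 2 ≤ (c * l2normD p * l2normD q) ^ 2 := by
    calc (∑ z ∈ F, cp (f z) * cq (g z)) ^ 2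
        ≤ (∑ z ∈ F, (cp (f z)) ^ 2) * ∑ z ∈ F, (cq (g z)) ^ 2 := hcs
      _ ≤ (c * (l2normD p) ^ 2) * (c * (l2normD q) ^ 2) := by
          refine mul_le_mul h1 h2 (Finset.sum_nonneg fun z _ => sq_nonneg _) ?_
          exact le_trans (Finset.sum_nonneg fun z _ => sq_nonneg _) h1
      _ = (c * l2normD p * l2normD q) ^ 2 := by ring
  have := Real.sqrt_le_sqrt hsq
  rwa [Real.sqrt_sq hA, Real.sqrt_sq hC] at this



/-- For real-valued `p, q ∈ L²([-π,π]^D)`,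
`|Σ_{‖y‖_∞ ≤ Z} Σ_{‖z‖_∞ ≤ Z} y^{2s} z^{2s} c_p(y−z) c_q(z−y)|
  ≤ (2π)^D ‖p‖_{L²} ‖q‖_{L²} Σ_{‖z‖_∞ ≤ Z} z^{4s}`. -/
theorem convolution_term_bound (s : ℝ) (hs : 0 ≤ s) (D : ℕ) (hD : 1 ≤ D)
    (Z : ℤ) (hZ : 1 ≤ Z) (p q : (Fin D → ℝ) → ℝ)
    (hp : MemLp (fun x => (p x : ℂ)) 2 (volume.restrict (XD D)))
    (hq : MemLp (fun x => (q x : ℂ)) 2 (volume.restrict (XD D))) :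
    ‖∑ y ∈ cube D Z, ∑ z ∈ cube D Z,
        ((wtD s y : ℝ) : ℂ) * (wtD s z : ℂ) *
          fcD (fun x => (p x : ℂ)) (y - z) * fcD (fun x => (q x : ℂ)) (z - y)‖ ≤
      (2 * Real.pi) ^ D * l2normD p * l2normD q * ∑ z ∈ cube D Z, wtD (2 * s) z := by
  classical
  set C : ℝ := (2 * Real.pi) ^ D * l2normD p * l2normD q with hCdef
  have hC0 : 0 ≤ C :=
    mul_nonneg (mul_nonneg (by positivity) (l2normD_nonneg p)) (l2normD_nonneg q)
  set t : (Fin D → ℤ) → (Fin D → ℤ) → ℝ := fun y z =>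
    ‖fcD (fun x => (p x : ℂ)) (y - z)‖ *
      ‖fcD (fun x => (q x : ℂ)) (z - y)‖ with htdef
  have ht0 : ∀ y z, 0 ≤ t y z := fun y z =>
    mul_nonneg (norm_nonneg _) (norm_nonneg _)
  have hwt0 : ∀ (r : ℝ) (m : Fin D → ℤ), 0 ≤ wtD r m := fun r m =>
    Finset.prod_nonneg fun j _ => Real.rpow_nonneg (sq_nonneg _) r
  have hwt2 : ∀ m : Fin D → ℤ, (wtD s m) ^ 2 = wtD (2 * s) m := by
    intro m
    unfold wtD
    rw [← Finset.prod_pow]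
    refine Finset.prod_congr rfl fun j _ => ?_
    rw [← Real.rpow_natCast ((((m j : ℝ)) ^ 2) ^ s) 2, ← Real.rpow_mul (sq_nonneg _)]
    norm_num
    rw [mul_comm]
  -- triangle inequality
  have tri : ‖∑ y ∈ cube D Z, ∑ z ∈ cube D Z,
        ((wtD s y : ℝ) : ℂ) * (wtD s z : ℂ) *
          fcD (fun x => (p x : ℂ)) (y - z) * fcD (fun x => (q x : ℂ)) (z - y)‖ ≤
      ∑ y ∈ cube D Z, ∑ z ∈ cube D Z, (wtD s y * wtD s z) * t y z := by
    refine le_trans (norm_sum_le _ _) (Finset.sum_le_sum fun y _ => ?_)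
    refine le_trans (norm_sum_le _ _) (Finset.sum_le_sum fun z _ => le_of_eq ?_)
    rw [htdef]
    simp only [norm_mul, Complex.norm_real, Real.norm_eq_abs, abs_of_nonneg (hwt0 s y), abs_of_nonneg (hwt0 s z)]
    ring
  -- the key Cauchy-Schwarz bounds
  have key1 : ∀ y, ∑ z ∈ cube D Z, t y z ≤ C := by
    intro y
    exact cs_bound p q hp hq (cube D Z) (fun z => y - z) (fun z => z - y)
      (fun a b h => by rwa [sub_right_inj] at h)
      (fun a b h => by rwa [sub_left_inj] at h)
  have key2 : ∀ z, ∑ y ∈ cube D Z, t y z ≤ C := by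
    intro z
    exact cs_bound p q hp hq (cube D Z) (fun y => y - z) (fun y => z - y)
      (fun a b h => by rwa [sub_left_inj] at h)
      (fun a b h => by rwa [sub_right_inj] at h)
  -- step: replace w_y w_z by (w_y² + w_z²)/2
  have step1 : ∑ y ∈ cube D Z, ∑ z ∈ cube D Z, (wtD s y * wtD s z) * t y z ≤
      ∑ y ∈ cube D Z, ∑ z ∈ cube D Z, ((wtD (2*s) y + wtD (2*s) z) / 2) * t y z := by
    refine Finset.sum_le_sum fun y _ => Finset.sum_le_sum fun z _ => ?_
    refine mul_le_mul_of_nonneg_right ?_ (ht0 y z)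
    rw [← hwt2 y, ← hwt2 z]
    nlinarith [sq_nonneg (wtD s y - wtD s z)]
  -- split the sum
  have hsplit : ∑ y ∈ cube D Z, ∑ z ∈ cube D Z, ((wtD (2*s) y + wtD (2*s) z) / 2) * t y z =
      ((∑ y ∈ cube D Z, ∑ z ∈ cube D Z, wtD (2*s) y * t y z) +
       (∑ y ∈ cube D Z, ∑ z ∈ cube D Z, wtD (2*s) z * t y z)) / 2 := by
    rw [← Finset.sum_add_distrib, Finset.sum_div]
    refine (Finset.sum_congr rfl fun y _ => ?_)
    rw [← Finset.sum_add_distrib, Finset.sum_div]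
    refine Finset.sum_congr rfl fun z _ => ?_
    ring
  have hA : ∑ y ∈ cube D Z, ∑ z ∈ cube D Z, wtD (2*s) y * t y z ≤
      C * ∑ z ∈ cube D Z, wtD (2*s) z := by
    calc ∑ y ∈ cube D Z, ∑ z ∈ cube D Z, wtD (2*s) y * t y z
        = ∑ y ∈ cube D Z, wtD (2*s) y * ∑ z ∈ cube D Z, t y z := by
          exact Finset.sum_congr rfl fun y _ => (Finset.mul_sum _ _ _).symm
      _ ≤ ∑ y ∈ cube D Z, wtD (2*s) y * C :=
          Finset.sum_le_sum fun y _ => mul_le_mul_of_nonneg_left (key1 y) (hwt0 _ y)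
      _ = C * ∑ y ∈ cube D Z, wtD (2*s) y := by
          rw [← Finset.sum_mul, mul_comm]
  have hB : ∑ y ∈ cube D Z, ∑ z ∈ cube D Z, wtD (2*s) z * t y z ≤
      C * ∑ z ∈ cube D Z, wtD (2*s) z := by
    rw [Finset.sum_comm]
    calc ∑ z ∈ cube D Z, ∑ y ∈ cube D Z, wtD (2*s) z * t y z
        = ∑ z ∈ cube D Z, wtD (2*s) z * ∑ y ∈ cube D Z, t y z := by
          exact Finset.sum_congr rfl fun z _ => (Finset.mul_sum _ _ _).symm
      _ ≤ ∑ z ∈ cube D Z, wtD (2*s) z * C :=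
          Finset.sum_le_sum fun z _ => mul_le_mul_of_nonneg_left (key2 z) (hwt0 _ z)
      _ = C * ∑ z ∈ cube D Z, wtD (2*s) z := by
          rw [← Finset.sum_mul, mul_comm]
  calc ‖∑ y ∈ cube D Z, ∑ z ∈ cube D Z,
        ((wtD s y : ℝ) : ℂ) * (wtD s z : ℂ) *
          fcD (fun x => (p x : ℂ)) (y - z) * fcD (fun x => (q x : ℂ)) (z - y)‖
      ≤ ∑ y ∈ cube D Z, ∑ z ∈ cube D Z, (wtD s y * wtD s z) * t y z := tri
    _ ≤ ∑ y ∈ cube D Z, ∑ z ∈ cube D Z, ((wtD (2*s) y + wtD (2*s) z) / 2) * t y z := step1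
    _ = ((∑ y ∈ cube D Z, ∑ z ∈ cube D Z, wtD (2*s) y * t y z) +
         (∑ y ∈ cube D Z, ∑ z ∈ cube D Z, wtD (2*s) z * t y z)) / 2 := hsplit
    _ ≤ ((C * ∑ z ∈ cube D Z, wtD (2*s) z) + (C * ∑ z ∈ cube D Z, wtD (2*s) z)) / 2 := by
        apply div_le_div_of_nonneg_right ?_ ?_ <;> try norm_num
        · exact add_le_add hA hB
    _ = C * ∑ z ∈ cube D Z, wtD (2*s) z := by ring

end
end
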